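/- arXiv:2109.04453 — 6 statements merged into one kernel-verified Lean document; each statement's English description precedes it below -/
import Mathlib

section
/- Let n, p, q be positive natural numbers, let M be an n×n real symmetric matrix, C a q×n real matrix, D a q×p real matrix, and let λ, μ be real numbers and α > 0. If the symmetric block matrix [[λM, 0, Cᵀ], [0, (α−μ)·I_p, Dᵀ], [C, D, α·I_q]] (of size (n+p+q)×(n+p+q)) is positive semidefinite, then for all vectors x ∈ ℝⁿ and w ∈ ℝᵖ one has ‖C x + D w‖² ≤ α·(λ·xᵀ M x + (α−μ)·‖w‖²). -/
open Matrix

/-!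
Evaluate the quadratic form of the positive semidefinite block matrix at `(x, w, y)`: it equals
`λ xᵀMx + (α - μ)‖w‖² + 2 yᵀ(Cx + Dw) + α‖y‖²`. Minimising this over `y`, i.e. taking
`y = -(Cx + Dw)/α`, leaves the Schur complement `λ xᵀMx + (α - μ)‖w‖² - ‖Cx + Dw‖²/α ≥ 0`.
-/

/-- The 3×3 block matrix on the index type `Fin n ⊕ (Fin p ⊕ Fin q)`. -/
def blk3 {n p q : ℕ}
    (A11 : Matrix (Fin n) (Fin n) ℝ) (A12 : Matrix (Fin n) (Fin p) ℝ)
    (A13 : Matrix (Fin n) (Fin q) ℝ)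
    (A21 : Matrix (Fin p) (Fin n) ℝ) (A22 : Matrix (Fin p) (Fin p) ℝ)
    (A23 : Matrix (Fin p) (Fin q) ℝ)
    (A31 : Matrix (Fin q) (Fin n) ℝ) (A32 : Matrix (Fin q) (Fin p) ℝ)
    (A33 : Matrix (Fin q) (Fin q) ℝ) :
    Matrix (Fin n ⊕ (Fin p ⊕ Fin q)) (Fin n ⊕ (Fin p ⊕ Fin q)) ℝ :=
  Matrix.fromBlocks A11 (Matrix.of fun i j => Sum.elim (A12 i) (A13 i) j)
    (Matrix.of fun i j => Sum.elim (fun ip => A21 ip j) (fun iq => A31 iq j) i)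
    (Matrix.fromBlocks A22 A23 A32 A33)

theorem dotProduct_self_le_mul_of_forall_quadratic_nonneg {ι : Type*} [Fintype ι] {a α : ℝ}
    (hα : 0 < α) (s : ι → ℝ) (h : ∀ y : ι → ℝ, 0 ≤ a + 2 * (y ⬝ᵥ s) + α * (y ⬝ᵥ y)) :
    s ⬝ᵥ s ≤ α * a := by
  have key := h (-α⁻¹ • s)
  simp only [smul_dotProduct, dotProduct_smul, smul_eq_mul] at key
  field_simp at key
  nlinarith

theorem blk3_eq_fromBlocks {n p q : ℕ}
    (A11 : Matrix (Fin n) (Fin n) ℝ) (A12 : Matrix (Fin n) (Fin p) ℝ)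
    (A13 : Matrix (Fin n) (Fin q) ℝ)
    (A21 : Matrix (Fin p) (Fin n) ℝ) (A22 : Matrix (Fin p) (Fin p) ℝ)
    (A23 : Matrix (Fin p) (Fin q) ℝ)
    (A31 : Matrix (Fin q) (Fin n) ℝ) (A32 : Matrix (Fin q) (Fin p) ℝ)
    (A33 : Matrix (Fin q) (Fin q) ℝ) :
    blk3 A11 A12 A13 A21 A22 A23 A31 A32 A33 =
      fromBlocks A11 (fromCols A12 A13) (fromRows A21 A31) (fromBlocks A22 A23 A32 A33) := by
  ext (_ | _ | _) (_ | _ | _) <;> rfl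

theorem dotProduct_blk3_mulVec {n p q : ℕ} (P : Matrix (Fin n) (Fin n) ℝ)
    (Q : Matrix (Fin p) (Fin p) ℝ) (R : Matrix (Fin q) (Fin q) ℝ)
    (B : Matrix (Fin q) (Fin n) ℝ) (E : Matrix (Fin q) (Fin p) ℝ)
    (x : Fin n → ℝ) (w : Fin p → ℝ) (y : Fin q → ℝ) :
    Sum.elim x (Sum.elim w y) ⬝ᵥ (blk3 P 0 Bᵀ 0 Q Eᵀ B E R *ᵥ Sum.elim x (Sum.elim w y)) =
      x ⬝ᵥ (P *ᵥ x) + w ⬝ᵥ (Q *ᵥ w) + 2 * (y ⬝ᵥ (B *ᵥ x + E *ᵥ w)) + y ⬝ᵥ (R *ᵥ y) := by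
  have hB : x ⬝ᵥ (Bᵀ *ᵥ y) = y ⬝ᵥ (B *ᵥ x) := by
    rw [mulVec_transpose, dotProduct_comm, dotProduct_mulVec]
  have hE : w ⬝ᵥ (Eᵀ *ᵥ y) = y ⬝ᵥ (E *ᵥ w) := by
    rw [mulVec_transpose, dotProduct_comm, dotProduct_mulVec]
  simp only [blk3_eq_fromBlocks, fromBlocks_mulVec, Sum.elim_comp_inl, Sum.elim_comp_inr,
    fromCols_mulVec_sumElim, fromRows_mulVec, zero_mulVec, zero_add, ← Sum.elim_add_add,
    sumElim_dotProduct_sumElim, dotProduct_add, hB, hE]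
  ring

theorem stmt0_general (n p q : ℕ)
    (M : Matrix (Fin n) (Fin n) ℝ)
    (C : Matrix (Fin q) (Fin n) ℝ) (D : Matrix (Fin q) (Fin p) ℝ)
    (lam mu alp : ℝ) (halp : 0 < alp)
    (h : (blk3 (lam • M) 0 Cᵀ
               0 ((alp - mu) • (1 : Matrix (Fin p) (Fin p) ℝ)) Dᵀ
               C D (alp • (1 : Matrix (Fin q) (Fin q) ℝ))).PosSemidef) :
    ∀ (x : Fin n → ℝ) (w : Fin p → ℝ),
      (C *ᵥ x + D *ᵥ w) ⬝ᵥ (C *ᵥ x + D *ᵥ w) ≤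
        alp * (lam * (x ⬝ᵥ (M *ᵥ x)) + (alp - mu) * (w ⬝ᵥ w)) := by
  intro x w
  refine dotProduct_self_le_mul_of_forall_quadratic_nonneg halp _ fun y => ?_
  have hy := h.dotProduct_mulVec_nonneg (Sum.elim x (Sum.elim w y))
  rw [star_trivial, dotProduct_blk3_mulVec] at hy
  simpa only [smul_mulVec, one_mulVec, dotProduct_smul, smul_eq_mul] using hy

/-- If the block matrix [[λM, 0, Cᵀ], [0, (α−μ)I_p, Dᵀ], [C, D, αI_q]] is positive
semidefinite, then for all x, w one has ‖Cx + Dw‖² ≤ α(λ·xᵀMx + (α−μ)‖w‖²). -/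
theorem stmt0 (n p q : ℕ) (hn : 0 < n) (hp : 0 < p) (hq : 0 < q)
    (M : Matrix (Fin n) (Fin n) ℝ) (hM : M.IsSymm)
    (C : Matrix (Fin q) (Fin n) ℝ) (D : Matrix (Fin q) (Fin p) ℝ)
    (lam mu alp : ℝ) (halp : 0 < alp)
    (h : (blk3 (lam • M) 0 Cᵀ
               0 ((alp - mu) • (1 : Matrix (Fin p) (Fin p) ℝ)) Dᵀ
               C D (alp • (1 : Matrix (Fin q) (Fin q) ℝ))).PosSemidef) :
    ∀ (x : Fin n → ℝ) (w : Fin p → ℝ),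
      (C *ᵥ x + D *ᵥ w) ⬝ᵥ (C *ᵥ x + D *ᵥ w) ≤
        alp * (lam * (x ⬝ᵥ (M *ᵥ x)) + (alp - mu) * (w ⬝ᵥ w)) :=
  stmt0_general n p q M C D lam mu alp halp h
end

section
/- Let n, m, p be positive natural numbers, W an n×n real symmetric positive definite matrix, S an n×n real symmetric matrix, Y an m×n real matrix, A an n×n real matrix, B an n×m real matrix, Bw an n×p real matrix, and λ, μ real numbers. If the block matrix [[(AW + BY) + (AW + BY)ᵀ − S + λ·W, Bw], [Bwᵀ, −μ·I_p]] is negative semidefinite, then, setting M = W⁻¹, K = Y·W⁻¹ and M' = −W⁻¹·S·W⁻¹, the block matrix [[M(A + BK) + (A + BK)ᵀM + M' + λ·M, M·Bw], [Bwᵀ·M, −μ·I_p]] is also negative semidefinite. -/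
open Matrix

/-- Congruence-transformation step in Theorem 1: the synthesis LMI (14) in
(W, Y) implies the analysis LMI (9) with M = W⁻¹, K = YW⁻¹, Ṁ = −W⁻¹ẆW⁻¹. -/
theorem stmt3 (n m p : ℕ) (hn : 0 < n) (hm : 0 < m) (hp : 0 < p)
    (W : Matrix (Fin n) (Fin n) ℝ) (hW : W.PosDef)
    (S : Matrix (Fin n) (Fin n) ℝ) (hS : S.IsSymm)
    (Y : Matrix (Fin m) (Fin n) ℝ)
    (A : Matrix (Fin n) (Fin n) ℝ) (B : Matrix (Fin n) (Fin m) ℝ)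
    (Bw : Matrix (Fin n) (Fin p) ℝ) (lam mu : ℝ)
    (h : (-(Matrix.fromBlocks
        ((A * W + B * Y) + (A * W + B * Y)ᵀ - S + lam • W) Bw
        Bwᵀ (-(mu • (1 : Matrix (Fin p) (Fin p) ℝ))))).PosSemidef) :
    (-(Matrix.fromBlocks
        (W⁻¹ * (A + B * (Y * W⁻¹)) + (A + B * (Y * W⁻¹))ᵀ * W⁻¹ +
          (-(W⁻¹ * S * W⁻¹)) + lam • W⁻¹) (W⁻¹ * Bw)
        (Bwᵀ * W⁻¹) (-(mu • (1 : Matrix (Fin p) (Fin p) ℝ))))).PosSemidef := by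
  have hdet : IsUnit W.det := hW.det_pos.ne'.isUnit
  have hWW : W * W⁻¹ = 1 := mul_nonsing_inv W hdet
  have hWW' : W⁻¹ * W = 1 := nonsing_inv_mul W hdet
  have hsym : Wᵀ = W := hW.isHermitian.eq
  have hWinvsymm : (W⁻¹)ᵀ = W⁻¹ := by
    rw [transpose_nonsing_inv, hsym]
  set P : Matrix (Fin n ⊕ Fin p) (Fin n ⊕ Fin p) ℝ :=
    fromBlocks W⁻¹ 0 0 1 with hP
  have key := h.mul_mul_conjTranspose_same P
  have hPH : Pᴴ = P := by
    rw [show Pᴴ = Pᵀ from rfl, hP, fromBlocks_transpose, hWinvsymm]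
    simp
  rw [hPH] at key
  convert key using 1
  rw [hP, Matrix.mul_neg, Matrix.neg_mul]
  congr 1
  rw [fromBlocks_multiply, fromBlocks_multiply]
  simp only [Matrix.mul_add, Matrix.add_mul, Matrix.mul_sub, Matrix.sub_mul,
      Matrix.mul_smul, Matrix.smul_mul, transpose_add, transpose_mul, hsym,
      Matrix.zero_mul, Matrix.mul_zero, add_zero, zero_add, hWinvsymm,
      ← Matrix.mul_assoc, hWW', Matrix.one_mul, Matrix.mul_one, sub_eq_add_neg,
      Matrix.mul_nonsing_inv_cancel_right _ _ hdet, neg_mul, mul_neg, Matrix.neg_mul,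
      Matrix.mul_neg, smul_zero, add_zero]
  abel_nf
end

section
/- Let p, q be positive natural numbers and λ > 0, μ > 0, α > 0 with α ≥ μ, and let Ω ≥ 0 be a real number. Let E : ℝ → ℝ be a function with E(t) ≥ 0 for all t ≥ 0, having derivative E'(t) at every t ≥ 0, and let z, z⋆ : ℝ → ℝ^q and w, w⋆ : ℝ → ℝ^p be functions with ‖w(t) − w⋆(t)‖ ≤ Ω for all t ≥ 0. Suppose for all t ≥ 0: (i) E'(t) ≤ −λ·E(t) + μ·‖w(t) − w⋆(t)‖², and (ii) ‖z(t) − z⋆(t)‖² ≤ α·(λ·E(t) + (α−μ)·‖w(t) − w⋆(t)‖²). Then for all t ≥ 0, ‖z(t) − z⋆(t)‖² ≤ α²·Ω² + α·λ·E(0)·exp(−λ·t). -/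
open Real Set

theorem mul_le_mul_exp_neg_add_of_hasDerivAt_le {f f' : ℝ → ℝ} {lam ε : ℝ}
    (hlam : 0 < lam) (hε : 0 ≤ ε) (hf : ∀ t : ℝ, 0 ≤ t → HasDerivAt f (f' t) t)
    (bound : ∀ t : ℝ, 0 ≤ t → f' t ≤ -lam * f t + ε) {t : ℝ} (ht : 0 ≤ t) :
    lam * f t ≤ lam * f 0 * exp (-lam * t) + ε := by
  have hgronwall : f t ≤ gronwallBound (f 0) (-lam) ε t := by
    simpa using le_gronwallBound_of_liminf_deriv_right_le (a := 0) (b := t)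
      (fun s hs => (hf s hs.1).continuousAt.continuousWithinAt)
      (fun s hs _ hr => (hf s hs.1).hasDerivWithinAt.liminf_right_slope_le hr)
      le_rfl (fun s hs => bound s hs.1) t ⟨ht, le_rfl⟩
  rw [gronwallBound_of_K_ne_0 (neg_ne_zero.2 hlam.ne')] at hgronwall
  have htransient : lam * (ε / -lam * (exp (-lam * t) - 1)) = ε - ε * exp (-lam * t) := by
    field_simp
    ring
  nlinarith [mul_le_mul_of_nonneg_left hgronwall hlam.le, mul_nonneg hε (exp_nonneg (-lam * t))]

theorem stmt6_general (p q : ℕ)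
    (lam mu alp Ω : ℝ) (hlam : 0 < lam) (hmu : 0 < mu) (halp : 0 < alp)
    (hma : mu ≤ alp)
    (E E' : ℝ → ℝ)
    (hE : ∀ t : ℝ, 0 ≤ t → HasDerivAt E (E' t) t)
    (z zs : ℝ → EuclideanSpace ℝ (Fin q)) (w ws : ℝ → EuclideanSpace ℝ (Fin p))
    (hw : ∀ t : ℝ, 0 ≤ t → ‖w t - ws t‖ ≤ Ω)
    (h1 : ∀ t : ℝ, 0 ≤ t → E' t ≤ -lam * E t + mu * ‖w t - ws t‖ ^ 2)
    (h2 : ∀ t : ℝ, 0 ≤ t →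
      ‖z t - zs t‖ ^ 2 ≤ alp * (lam * E t + (alp - mu) * ‖w t - ws t‖ ^ 2)) :
    ∀ t : ℝ, 0 ≤ t →
      ‖z t - zs t‖ ^ 2 ≤ alp ^ 2 * Ω ^ 2 + alp * lam * E 0 * Real.exp (-lam * t) := by
  intro t ht
  have hdecay : lam * E t ≤ lam * E 0 * exp (-lam * t) + mu * Ω ^ 2 :=
    mul_le_mul_exp_neg_add_of_hasDerivAt_le hlam (mul_nonneg hmu.le (sq_nonneg Ω)) hE
      (fun s hs => (h1 s hs).trans (by gcongr; exact hw s hs)) ht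
  have hgap : 0 ≤ alp - mu := sub_nonneg.2 hma
  calc ‖z t - zs t‖ ^ 2 ≤ alp * (lam * E t + (alp - mu) * ‖w t - ws t‖ ^ 2) := h2 t ht
    _ ≤ alp * (lam * E 0 * exp (-lam * t) + mu * Ω ^ 2 + (alp - mu) * Ω ^ 2) := by
      gcongr
      exact hw t ht
    _ = alp ^ 2 * Ω ^ 2 + alp * lam * E 0 * Real.exp (-lam * t) := by ring

/-- Analytic core of Theorem 1: combining the energy decrease inequality (18)
with the pointwise output bound (22) yields the universal L∞-gain bound. -/
theorem stmt6 (p q : ℕ) (hp : 0 < p) (hq : 0 < q)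
    (lam mu alp Ω : ℝ) (hlam : 0 < lam) (hmu : 0 < mu) (halp : 0 < alp)
    (hma : mu ≤ alp) (hΩ : 0 ≤ Ω)
    (E E' : ℝ → ℝ)
    (hEnn : ∀ t : ℝ, 0 ≤ t → 0 ≤ E t)
    (hE : ∀ t : ℝ, 0 ≤ t → HasDerivAt E (E' t) t)
    (z zs : ℝ → EuclideanSpace ℝ (Fin q)) (w ws : ℝ → EuclideanSpace ℝ (Fin p))
    (hw : ∀ t : ℝ, 0 ≤ t → ‖w t - ws t‖ ≤ Ω)
    (h1 : ∀ t : ℝ, 0 ≤ t → E' t ≤ -lam * E t + mu * ‖w t - ws t‖ ^ 2)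
    (h2 : ∀ t : ℝ, 0 ≤ t →
      ‖z t - zs t‖ ^ 2 ≤ alp * (lam * E t + (alp - mu) * ‖w t - ws t‖ ^ 2)) :
    ∀ t : ℝ, 0 ≤ t →
      ‖z t - zs t‖ ^ 2 ≤ alp ^ 2 * Ω ^ 2 + alp * lam * E 0 * Real.exp (-lam * t) :=
  stmt6_general p q lam mu alp Ω hlam hmu halp hma E E' hE z zs w ws hw h1 h2
end

section
/- Let n be a positive natural number, W an n×n real symmetric positive semidefinite matrix, and λ > 0, α > 0 real numbers. Then λ·W − (1/α)·W² is positive semidefinite if and only if α·λ·I_n − W is positive semidefinite. -/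
/-! On the spectrum of `W`, which lies in `[0, ∞)`, the two matrices are the images of `W` under
the functional calculus for `x ↦ λx - x²/α` and `x ↦ αλ - x`, and these functions are
nonnegative at the same points `x ≥ 0` because `λx - x²/α = x (αλ - x) / α`. -/

open Matrix
open scoped MatrixOrder

lemma mul_sub_inv_mul_self_nonneg_iff {x lam alp : ℝ} (hx : 0 ≤ x) (hlam : 0 ≤ lam)
    (halp : 0 < alp) : 0 ≤ lam * x - alp⁻¹ * (x * x) ↔ x ≤ alp * lam := by
  have hfactor : lam * x - alp⁻¹ * (x * x) = alp⁻¹ * (x * (alp * lam - x)) := by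
    field_simp
  rw [hfactor, mul_nonneg_iff_of_pos_left (inv_pos.mpr halp), ← sub_nonneg (b := x)]
  rcases hx.eq_or_lt with rfl | hx
  · simpa using mul_nonneg halp.le hlam
  · exact mul_nonneg_iff_of_pos_left hx

section CFC

variable {A : Type*} [TopologicalSpace A] [Ring A] [StarRing A] [PartialOrder A]
  [StarOrderedRing A] [Algebra ℝ A] [ContinuousFunctionalCalculus ℝ A IsSelfAdjoint]
  [NonnegSpectrumClass ℝ A]

lemma smul_sub_inv_smul_mul_self_nonneg_iff {a : A} (ha : 0 ≤ a) {lam alp : ℝ}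
    (hlam : 0 ≤ lam) (halp : 0 < alp) :
    0 ≤ lam • a - alp⁻¹ • (a * a) ↔ 0 ≤ algebraMap ℝ A (alp * lam) - a := by
  have hleft : cfc (fun x : ℝ ↦ lam * x - alp⁻¹ * (x * x)) a = lam • a - alp⁻¹ • (a * a) := by
    rw [cfc_sub (lam * ·) (fun x ↦ alp⁻¹ * (x * x)) a, cfc_const_mul_id lam a,
      cfc_const_mul alp⁻¹ (fun x ↦ x * x) a, cfc_mul (fun x ↦ x) (fun x ↦ x) a, cfc_id' ℝ a]
  have hright : cfc (fun x : ℝ ↦ alp * lam - x) a = algebraMap ℝ A (alp * lam) - a := by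
    rw [cfc_sub (fun _ ↦ alp * lam) (fun x ↦ x) a, cfc_const (alp * lam) a, cfc_id' ℝ a]
  rw [← hleft, ← hright, cfc_nonneg_iff _ a, cfc_nonneg_iff _ a]
  exact forall₂_congr fun x hx ↦ (mul_sub_inv_mul_self_nonneg_iff
    (spectrum_nonneg_of_nonneg ha hx) hlam halp).trans sub_nonneg.symm

end CFC

theorem stmt10_general (n : ℕ)
    (W : Matrix (Fin n) (Fin n) ℝ) (hW : W.PosSemidef)
    (lam alp : ℝ) (hlam : 0 < lam) (halp : 0 < alp) :
    (lam • W - (1 / alp) • (W * W)).PosSemidef ↔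
      ((alp * lam) • (1 : Matrix (Fin n) (Fin n) ℝ) - W).PosSemidef := by
  rw [← nonneg_iff_posSemidef, ← nonneg_iff_posSemidef, one_div, ← Algebra.algebraMap_eq_smul_one]
  exact smul_sub_inv_smul_mul_self_nonneg_iff hW.nonneg hlam.le halp

/-- Spectral step in Lemma 3: for W ⪰ 0, λW − (1/α)W² ⪰ 0 iff W ⪯ αλ·I. -/
theorem stmt10 (n : ℕ) (hn : 0 < n)
    (W : Matrix (Fin n) (Fin n) ℝ) (hW : W.PosSemidef)
    (lam alp : ℝ) (hlam : 0 < lam) (halp : 0 < alp) :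
    (lam • W - (1 / alp) • (W * W)).PosSemidef ↔
      ((alp * lam) • (1 : Matrix (Fin n) (Fin n) ℝ) - W).PosSemidef :=
  stmt10_general n W hW lam alp hlam halp
end

section
/- Let n, m, p be positive natural numbers. Let A be an n×n real matrix, B an n×m real matrix, Bw an n×p real matrix, Ŷ an m×n real matrix, S an n×n real symmetric matrix, and Ŵ an n×n real symmetric matrix. Let β₁, β₂, λ̂, s be real numbers with 0 < β₁ ≤ β₂, λ̂ > 0, s > 0, and suppose β₁·I_n ≤ Ŵ ≤ β₂·I_n and Bw·Bwᵀ ≤ s²·I_n in the Loewner order. Suppose moreover that −S + (AŴ + BŶ) + (AŴ + BŶ)ᵀ + 2λ̂·Ŵ is negative semidefinite. Define a = s/√(β₂·β₁), α̂ = (s/λ̂)·√(β₂/β₁), W = a·Ŵ, and Y = a·Ŷ. Then: (i) the block matrix [[(AW + BY) + (AW + BY)ᵀ − a·S + λ̂·W, Bw], [Bwᵀ, −α̂·I_p]] is negative semidefinite, and (ii) the block matrix [[λ̂·W, 0, W], [0, 0·I_p, 0], [W, 0, α̂·I_n]] is positive semidefinite. -/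
/-!
Both block conditions reduce, by the Schur complement with respect to the scalar block `α̂ I`,
to Loewner inequalities between `n × n` matrices. For (i) the complement is the nonnegative
combination `a • (27) + a λ̂ • (Ŵ - β₁ I) + α̂⁻¹ • (s² I - Bw Bwᵀ)` of the CCM condition (27)
and the two bounds: the multiples of `I` cancel because `a λ̂ β₁ α̂ = s²`. For (ii) the
complement is `λ̂ W - α̂⁻¹ W²`, which is nonnegative since `0 ≤ W ≤ a β₂ I = λ̂ α̂ I`; the zero
middle block is removed by reindexing.
-/

open Matrix

open scoped ComplexOrder

namespace Matrix

variable {m n 𝕜 : Type*} [RCLike 𝕜] [Fintype m] [Fintype n]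

theorem PosSemidef.fromBlocks_zero_zero {A : Matrix m m 𝕜} {D : Matrix n n 𝕜}
    (hA : A.PosSemidef) (hD : D.PosSemidef) : (fromBlocks A 0 0 D).PosSemidef := by
  rw [posSemidef_iff_dotProduct_mulVec]
  refine ⟨hA.1.fromBlocks (by simp) hD.1, fun x => ?_⟩
  have h₁ := hA.dotProduct_mulVec_nonneg (x ∘ Sum.inl)
  have h₂ := hD.dotProduct_mulVec_nonneg (x ∘ Sum.inr)
  simp only [dotProduct, Fintype.sum_sum_type, fromBlocks_mulVec, zero_mulVec, add_zero,
    zero_add, Function.comp_apply, Pi.star_apply] at h₁ h₂ ⊢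
  exact add_nonneg h₁ h₂

theorem posSemidef_fromBlocks_smul_one_iff [DecidableEq n] (A : Matrix m m 𝕜)
    (B : Matrix m n 𝕜) {α : ℝ} (hα : 0 < α) :
    (fromBlocks A B Bᴴ (α • 1)).PosSemidef ↔ (A - α⁻¹ • (B * Bᴴ)).PosSemidef := by
  have hD : (α • 1 : Matrix n n 𝕜).PosDef := PosDef.one.smul hα
  let := hD.isUnit.invertible
  have hinv : (α • 1 : Matrix n n 𝕜)⁻¹ = α⁻¹ • 1 :=
    inv_eq_left_inv (by rw [smul_mul_smul_comm, inv_mul_cancel₀ hα.ne', one_smul, Matrix.one_mul])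
  rw [PosDef.fromBlocks₂₂ A B hD, hinv, Matrix.mul_smul, Matrix.mul_one, Matrix.smul_mul]

theorem PosSemidef.smul_sub_mul_self [DecidableEq n] {X : Matrix n n 𝕜} {c : ℝ} (hc : 0 < c)
    (hX : X.PosSemidef) (hXc : (c • 1 - X).PosSemidef) : (c • X - X * X).PosSemidef := by
  -- `c (c X - X²) = X (c - X) X + (c - X) X (c - X)`
  have hsum := (hXc.conjTranspose_mul_mul_same X).add (hX.conjTranspose_mul_mul_same (c • 1 - X))
  have key : c⁻¹ • (Xᴴ * (c • 1 - X) * X + (c • 1 - X)ᴴ * X * (c • 1 - X)) = c • X - X * X := by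
    rw [hX.1.eq, hXc.1.eq]
    simp only [Matrix.mul_sub, Matrix.sub_mul, Matrix.mul_smul, Matrix.smul_mul, Matrix.mul_one,
      Matrix.one_mul, Matrix.mul_assoc]
    match_scalars <;> field_simp <;> ring
  simpa only [key] using hsum.smul (inv_nonneg.mpr hc.le)

theorem posSemidef_fromBlocks_smul_self_self_smul_one [DecidableEq n] {X : Matrix n n 𝕜}
    {lam α : ℝ} (hlam : 0 < lam) (hα : 0 < α) (hX : X.PosSemidef)
    (hXle : ((lam * α) • 1 - X).PosSemidef) : (fromBlocks (lam • X) X X (α • 1)).PosSemidef := by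
  have hschur : lam • X - α⁻¹ • (X * Xᴴ) = α⁻¹ • ((lam * α) • X - X * X) := by
    rw [hX.1.eq, smul_sub, smul_smul, mul_left_comm, inv_mul_cancel₀ hα.ne', mul_one]
  nth_rw 3 [← hX.1.eq]
  rw [posSemidef_fromBlocks_smul_one_iff _ _ hα, hschur]
  exact (hX.smul_sub_mul_self (mul_pos hlam hα) hXle).smul (inv_nonneg.mpr hα.le)

end Matrix

theorem blk3_zero_middle_eq_submatrix {n p q : ℕ} (A : Matrix (Fin n) (Fin n) ℝ)
    (B : Matrix (Fin n) (Fin q) ℝ) (C : Matrix (Fin q) (Fin n) ℝ) (D : Matrix (Fin q) (Fin q) ℝ)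
    (E : Matrix (Fin p) (Fin p) ℝ) :
    blk3 A 0 B 0 E 0 C 0 D = (fromBlocks (fromBlocks A B C D) 0 0 E).submatrix
      (Sum.elim (Sum.inl ∘ Sum.inl) (Sum.elim Sum.inr (Sum.inl ∘ Sum.inr)))
      (Sum.elim (Sum.inl ∘ Sum.inl) (Sum.elim Sum.inr (Sum.inl ∘ Sum.inr))) := by
  ext (i | i | i) (j | j | j) <;> simp [blk3]

theorem posSemidef_blk3_zero_middle {n p q : ℕ} {A : Matrix (Fin n) (Fin n) ℝ}
    {B : Matrix (Fin n) (Fin q) ℝ} {C : Matrix (Fin q) (Fin n) ℝ} {D : Matrix (Fin q) (Fin q) ℝ}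
    {E : Matrix (Fin p) (Fin p) ℝ} (hABCD : (fromBlocks A B C D).PosSemidef)
    (hE : E.PosSemidef) : (blk3 A 0 B 0 E 0 C 0 D).PosSemidef := by
  rw [blk3_zero_middle_eq_submatrix]
  exact (hABCD.fromBlocks_zero_zero hE).submatrix _

theorem rccm_contraction_of_ccm {ι κ : Type*} [Fintype ι] [Fintype κ] [DecidableEq ι]
    [DecidableEq κ] (F S What : Matrix ι ι ℝ) (Bw : Matrix ι κ ℝ) {β₁ lam s a α : ℝ}
    (ha : 0 ≤ a) (hlam : 0 ≤ lam) (hα : 0 < α) (hscale : α⁻¹ * s ^ 2 = a * lam * β₁)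
    (hlow : (What - β₁ • 1).PosSemidef) (hBw : (s ^ 2 • 1 - Bw * Bwᵀ).PosSemidef)
    (hccm : (-(-S + (F + Fᵀ) + (2 * lam) • What)).PosSemidef) :
    (-(fromBlocks (a • F + (a • F)ᵀ - a • S + lam • (a • What)) Bw Bwᵀ
      (-(α • 1)))).PosSemidef := by
  have hschur : -(a • F + (a • F)ᵀ - a • S + lam • (a • What)) - α⁻¹ • (Bw * Bwᵀ) =
      a • (-(-S + (F + Fᵀ) + (2 * lam) • What)) + (a * lam) • (What - β₁ • 1) +
        α⁻¹ • (s ^ 2 • 1 - Bw * Bwᵀ) := by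
    rw [transpose_smul]
    linear_combination (norm := module) (-hscale) • (1 : Matrix ι ι ℝ)
  have hBw' : -Bwᵀ = (-Bw)ᴴ := by
    rw [conjTranspose_neg, conjTranspose_eq_transpose_of_trivial]
  rw [fromBlocks_neg, neg_neg, hBw', posSemidef_fromBlocks_smul_one_iff _ _ hα,
    conjTranspose_neg, Matrix.neg_mul, Matrix.mul_neg, neg_neg,
    conjTranspose_eq_transpose_of_trivial, hschur]
  exact ((hccm.smul ha).add (hlow.smul (mul_nonneg ha hlam))).add (hBw.smul (inv_nonneg.mpr hα.le))

theorem ccm_gain_inv_mul_sq {β₁ β₂ lam s : ℝ} (hβ₁ : 0 < β₁) (hβ₂ : 0 < β₂) (hlam : lam ≠ 0) :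
    (s / lam * √(β₂ / β₁))⁻¹ * s ^ 2 = s / √(β₂ * β₁) * lam * β₁ := by
  obtain rfl | hs := eq_or_ne s 0
  · simp
  have h₁ : √β₁ ^ 2 = β₁ := Real.sq_sqrt hβ₁.le
  have : 0 < √β₁ := Real.sqrt_pos.mpr hβ₁
  have : 0 < √β₂ := Real.sqrt_pos.mpr hβ₂
  rw [Real.sqrt_div hβ₂.le, Real.sqrt_mul hβ₂.le]
  field_simp
  linear_combination h₁

theorem ccm_scale_mul_eq_lam_mul_gain {β₁ β₂ lam s : ℝ} (hβ₁ : 0 < β₁) (hβ₂ : 0 < β₂)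
    (hlam : lam ≠ 0) :
    s / √(β₂ * β₁) * β₂ = lam * (s / lam * √(β₂ / β₁)) := by
  have h₂ : √β₂ ^ 2 = β₂ := Real.sq_sqrt hβ₂.le
  have : 0 < √β₁ := Real.sqrt_pos.mpr hβ₁
  have : 0 < √β₂ := Real.sqrt_pos.mpr hβ₂
  rw [Real.sqrt_div hβ₂.le, Real.sqrt_mul hβ₂.le]
  field_simp
  linear_combination (-s) * h₂

theorem stmt11_general (n m p : ℕ)
    (A : Matrix (Fin n) (Fin n) ℝ) (B : Matrix (Fin n) (Fin m) ℝ)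
    (Bw : Matrix (Fin n) (Fin p) ℝ) (Yhat : Matrix (Fin m) (Fin n) ℝ)
    (S : Matrix (Fin n) (Fin n) ℝ)
    (What : Matrix (Fin n) (Fin n) ℝ)
    (β₁ β₂ lamhat s : ℝ) (hβ₁ : 0 < β₁) (hβ₁₂ : β₁ ≤ β₂)
    (hlam : 0 < lamhat) (hs : 0 < s)
    (hlow : (What - β₁ • (1 : Matrix (Fin n) (Fin n) ℝ)).PosSemidef)
    (hupp : (β₂ • (1 : Matrix (Fin n) (Fin n) ℝ) - What).PosSemidef)
    (hBw : (s ^ 2 • (1 : Matrix (Fin n) (Fin n) ℝ) - Bw * Bwᵀ).PosSemidef)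
    (hccm : (-(-S + ((A * What + B * Yhat) + (A * What + B * Yhat)ᵀ) +
        (2 * lamhat) • What)).PosSemidef)
    (a alphat : ℝ) (W : Matrix (Fin n) (Fin n) ℝ) (Y : Matrix (Fin m) (Fin n) ℝ)
    (ha : a = s / Real.sqrt (β₂ * β₁))
    (halphat : alphat = (s / lamhat) * Real.sqrt (β₂ / β₁))
    (hWdef : W = a • What) (hYdef : Y = a • Yhat) :
    (-(Matrix.fromBlocks
        ((A * W + B * Y) + (A * W + B * Y)ᵀ - a • S + lamhat • W) Bw
        Bwᵀ (-(alphat • (1 : Matrix (Fin p) (Fin p) ℝ))))).PosSemidef ∧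
    (blk3 (lamhat • W) 0 W
          0 ((0 : ℝ) • (1 : Matrix (Fin p) (Fin p) ℝ)) 0
          W 0 (alphat • (1 : Matrix (Fin n) (Fin n) ℝ))).PosSemidef := by
  have hβ₂ : 0 < β₂ := hβ₁.trans_le hβ₁₂
  have ha_pos : 0 < a := by rw [ha]; positivity
  have hα_pos : 0 < alphat := by rw [halphat]; positivity
  have hWhat_psd : What.PosSemidef := by
    simpa using hlow.add (PosSemidef.one.smul hβ₁.le)
  have hW_le : ((lamhat * alphat) • 1 - W).PosSemidef := by
    rw [hWdef, ha, halphat, ← ccm_scale_mul_eq_lam_mul_gain hβ₁ hβ₂ hlam.ne', mul_smul, ← smul_sub]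
    exact hupp.smul (by positivity)
  have hAB : A * W + B * Y = a • (A * What + B * Yhat) := by
    rw [hWdef, hYdef, Matrix.mul_smul, Matrix.mul_smul, smul_add]
  constructor
  · rw [hAB, hWdef]
    refine rccm_contraction_of_ccm _ S What Bw ha_pos.le hlam.le hα_pos ?_ hlow hBw hccm
    rw [ha, halphat, ccm_gain_inv_mul_sq hβ₁ hβ₂ hlam.ne']
  · rw [zero_smul]
    exact posSemidef_blk3_zero_middle (posSemidef_fromBlocks_smul_self_self_smul_one hlam hα_pos
      (hWdef ▸ hWhat_psd.smul ha_pos.le) hW_le) PosSemidef.zero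

/-- Pointwise matrix formulation of Lemma 3: the CCM condition (27) implies
that the scaled pair W = aŴ, Y = aŶ with λ = λ̂ and α = μ = α̂ satisfies the
RCCM synthesis conditions (14) and (15) with C = I_n and D = 0. -/
theorem stmt11 (n m p : ℕ) (hn : 0 < n) (hm : 0 < m) (hp : 0 < p)
    (A : Matrix (Fin n) (Fin n) ℝ) (B : Matrix (Fin n) (Fin m) ℝ)
    (Bw : Matrix (Fin n) (Fin p) ℝ) (Yhat : Matrix (Fin m) (Fin n) ℝ)
    (S : Matrix (Fin n) (Fin n) ℝ) (hS : S.IsSymm)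
    (What : Matrix (Fin n) (Fin n) ℝ) (hWhat : What.IsSymm)
    (β₁ β₂ lamhat s : ℝ) (hβ₁ : 0 < β₁) (hβ₁₂ : β₁ ≤ β₂)
    (hlam : 0 < lamhat) (hs : 0 < s)
    (hlow : (What - β₁ • (1 : Matrix (Fin n) (Fin n) ℝ)).PosSemidef)
    (hupp : (β₂ • (1 : Matrix (Fin n) (Fin n) ℝ) - What).PosSemidef)
    (hBw : (s ^ 2 • (1 : Matrix (Fin n) (Fin n) ℝ) - Bw * Bwᵀ).PosSemidef)
    (hccm : (-(-S + ((A * What + B * Yhat) + (A * What + B * Yhat)ᵀ) +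
        (2 * lamhat) • What)).PosSemidef)
    (a alphat : ℝ) (W : Matrix (Fin n) (Fin n) ℝ) (Y : Matrix (Fin m) (Fin n) ℝ)
    (ha : a = s / Real.sqrt (β₂ * β₁))
    (halphat : alphat = (s / lamhat) * Real.sqrt (β₂ / β₁))
    (hWdef : W = a • What) (hYdef : Y = a • Yhat) :
    (-(Matrix.fromBlocks
        ((A * W + B * Y) + (A * W + B * Y)ᵀ - a • S + lamhat • W) Bw
        Bwᵀ (-(alphat • (1 : Matrix (Fin p) (Fin p) ℝ))))).PosSemidef ∧
    (blk3 (lamhat • W) 0 W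
          0 ((0 : ℝ) • (1 : Matrix (Fin p) (Fin p) ℝ)) 0
          W 0 (alphat • (1 : Matrix (Fin n) (Fin n) ℝ))).PosSemidef :=
  stmt11_general n m p A B Bw Yhat S What β₁ β₂ lamhat s hβ₁ hβ₁₂ hlam hs hlow hupp hBw hccm a
    alphat W Y ha halphat hWdef hYdef
end

section
/- Let n, m, p be positive natural numbers. Let A be an n×n real matrix, B an n×m real matrix, Bw an n×p real matrix, Ŷ an m×n real matrix, S an n×n real symmetric matrix, and Ŵ an n×n real symmetric matrix. Let β₁, β₂, λ̂, s be real numbers with 0 < β₁ ≤ β₂, λ̂ > 0, s > 0, and suppose β₁·I_n ≤ Ŵ ≤ β₂·I_n and Bw·Bwᵀ ≤ s²·I_n in the Loewner order, and that −S + (AŴ + BŶ) + (AŴ + BŶ)ᵀ + 2λ̂·Ŵ ≤ 0 (negative semidefinite). Set α̂ = (s/λ̂)·√(β₂/β₁). Then there exist real numbers a > 0, λ > 0, μ > 0, and α with 0 < α ≤ α̂ such that, with W = a·Ŵ and Y = a·Ŷ: (i) the block matrix [[(AW + BY) + (AW + BY)ᵀ − a·S + λ·W, Bw], [Bwᵀ,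 −μ·I_p]] is negative semidefinite, and (ii) the block matrix [[λ·W, 0, W], [0, (α−μ)·I_p, 0], [W, 0, α·I_n]] is positive semidefinite. -/
open Matrix

private lemma ctR {k l : Type*} (M : Matrix k l ℝ) : Mᴴ = Mᵀ := by
  ext i j; simp [Matrix.conjTranspose_apply]

private lemma psd_smul {k : Type*} [Fintype k] {M : Matrix k k ℝ} (hM : M.PosSemidef)
    {c : ℝ} (hc : 0 ≤ c) : (c • M).PosSemidef := by
  refine Matrix.PosSemidef.of_dotProduct_mulVec_nonneg ?_ fun x => ?_
  · simp [Matrix.IsHermitian, Matrix.conjTranspose_smul, show Mᵀ = M from (ctR M) ▸ hM.1.eq]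
  · have := hM.dotProduct_mulVec_nonneg x
    simp only [Matrix.smul_mulVec, dotProduct_smul, smul_eq_mul]
    exact mul_nonneg hc (by simpa using this)

private lemma pd_smul {k : Type*} [Fintype k] {M : Matrix k k ℝ} (hM : M.PosDef)
    {c : ℝ} (hc : 0 < c) : (c • M).PosDef := by
  refine Matrix.posDef_iff_dotProduct_mulVec.mpr ⟨?_, fun x hx => ?_⟩
  · simp [Matrix.IsHermitian, Matrix.conjTranspose_smul, show Mᵀ = M from (ctR M) ▸ hM.1.eq]
  · have := hM.dotProduct_mulVec_pos hx
    simp only [Matrix.smul_mulVec, dotProduct_smul, smul_eq_mul]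
    exact mul_pos hc (by simpa using this)

private lemma psd_blockDiag {k l : Type*} [Fintype k] [Fintype l]
    {P : Matrix k k ℝ} {Q : Matrix l l ℝ} (hP : P.PosSemidef) (hQ : Q.PosSemidef) :
    (Matrix.fromBlocks P 0 0 Q).PosSemidef := by
  refine Matrix.PosSemidef.of_dotProduct_mulVec_nonneg ?_ fun x => ?_
  · rw [Matrix.isHermitian_fromBlocks_iff]
    exact ⟨hP.1, by simp, by simp, hQ.1⟩
  · rw [Matrix.fromBlocks_mulVec, Matrix.dotProduct_block]
    simp only [Matrix.zero_mulVec, add_zero, zero_add, Sum.elim_comp_inl, Sum.elim_comp_inr]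
    exact add_nonneg (by simpa using hP.dotProduct_mulVec_nonneg (x ∘ Sum.inl)) (by simpa using hQ.dotProduct_mulVec_nonneg (x ∘ Sum.inr))

private lemma smul_inv_eq {k : Type*} [Fintype k] [DecidableEq k] {c : ℝ} (hc : c ≠ 0)
    {M : Matrix k k ℝ} (hM : IsUnit M.det) : (c • M)⁻¹ = c⁻¹ • M⁻¹ :=
  Matrix.inv_eq_right_inv (by
    rw [Matrix.smul_mul, Matrix.mul_smul, smul_smul, mul_inv_cancel₀ hc, one_smul,
      Matrix.mul_nonsing_inv _ hM])

private lemma fromBlocks_sub' {k l : Type*} (A A' : Matrix k k ℝ) (B B' : Matrix k l ℝ)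
    (C C' : Matrix l k ℝ) (D D' : Matrix l l ℝ) :
    Matrix.fromBlocks A B C D - Matrix.fromBlocks A' B' C' D' =
      Matrix.fromBlocks (A - A') (B - B') (C - C') (D - D') := by
  ext i j; cases i <;> cases j <;> simp [Matrix.fromBlocks]

/-- Pointwise matrix formulation of Theorem 2: whenever the CCM condition (27)
holds, the RCCM synthesis conditions (14)–(15) with C = I_n, D = 0 are feasible
with an L∞-gain bound α no larger than α̂ = (s/λ̂)√(β₂/β₁). -/
theorem stmt12 (n m p : ℕ) (hn : 0 < n) (hm : 0 < m) (hp : 0 < p)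
    (A : Matrix (Fin n) (Fin n) ℝ) (B : Matrix (Fin n) (Fin m) ℝ)
    (Bw : Matrix (Fin n) (Fin p) ℝ) (Yhat : Matrix (Fin m) (Fin n) ℝ)
    (S : Matrix (Fin n) (Fin n) ℝ) (hS : S.IsSymm)
    (What : Matrix (Fin n) (Fin n) ℝ) (hWhat : What.IsSymm)
    (β₁ β₂ lamhat s : ℝ) (hβ₁ : 0 < β₁) (hβ₁₂ : β₁ ≤ β₂)
    (hlam : 0 < lamhat) (hs : 0 < s)
    (hlow : (What - β₁ • (1 : Matrix (Fin n) (Fin n) ℝ)).PosSemidef)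
    (hupp : (β₂ • (1 : Matrix (Fin n) (Fin n) ℝ) - What).PosSemidef)
    (hBw : (s ^ 2 • (1 : Matrix (Fin n) (Fin n) ℝ) - Bw * Bwᵀ).PosSemidef)
    (hccm : (-(-S + ((A * What + B * Yhat) + (A * What + B * Yhat)ᵀ) +
        (2 * lamhat) • What)).PosSemidef) :
    ∃ (a lam mu alp : ℝ), 0 < a ∧ 0 < lam ∧ 0 < mu ∧ 0 < alp ∧
      alp ≤ (s / lamhat) * Real.sqrt (β₂ / β₁) ∧
      (-(Matrix.fromBlocks
          ((A * (a • What) + B * (a • Yhat)) + (A * (a • What) + B * (a • Yhat))ᵀ -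
            a • S + lam • (a • What)) Bw
          Bwᵀ (-(mu • (1 : Matrix (Fin p) (Fin p) ℝ))))).PosSemidef ∧
      (blk3 (lam • (a • What)) 0 (a • What)
            0 ((alp - mu) • (1 : Matrix (Fin p) (Fin p) ℝ)) 0
            (a • What) 0 (alp • (1 : Matrix (Fin n) (Fin n) ℝ))).PosSemidef := by
  have hβ₂ : 0 < β₂ := lt_of_lt_of_le hβ₁ hβ₁₂
  have hd0 : 0 < Real.sqrt (β₁ * β₂) := Real.sqrt_pos.2 (by positivity)
  have he0 : 0 < Real.sqrt (β₂ / β₁) := Real.sqrt_pos.2 (by positivity)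
  have hsq1 : Real.sqrt (β₂ / β₁) * Real.sqrt (β₁ * β₂) = β₂ := by
    rw [← Real.sqrt_mul (by positivity), show β₂ / β₁ * (β₁ * β₂) = β₂ ^ 2 by
      field_simp, Real.sqrt_sq hβ₂.le]
  have hsq2 : Real.sqrt (β₂ / β₁) * β₁ = Real.sqrt (β₁ * β₂) := by
    rw [show β₁ * β₂ = β₂ / β₁ * β₁ ^ 2 by field_simp,
      Real.sqrt_mul (by positivity), Real.sqrt_sq hβ₁.le]
  set d := Real.sqrt (β₁ * β₂) with hdd
  set e := Real.sqrt (β₂ / β₁) with hee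
  set a : ℝ := s / d with ha
  set alp : ℝ := s / lamhat * e with halp
  have ha0 : 0 < a := by positivity
  have halp0 : 0 < alp := by positivity
  have h1 : alp * lamhat = a * β₂ := by
    rw [ha, halp, ← hsq1]; field_simp
  have h2 : alp⁻¹ * s ^ 2 = a * lamhat * β₁ := by
    rw [ha, halp, ← hsq2]; field_simp
  have hWpd : What.PosDef := by
    have h := (pd_smul Matrix.PosDef.one hβ₁).add_posSemidef hlow
    simpa using h
  have hWdet : IsUnit What.det := isUnit_iff_ne_zero.2 hWpd.det_pos.ne'
  refine ⟨a, lamhat, alp, alp, ha0, hlam, halp0, halp0, le_of_eq (by rw [halp]), ?_, ?_⟩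
  · -- condition (i)
    have hmu1 : (alp • (1 : Matrix (Fin p) (Fin p) ℝ)).PosDef :=
      pd_smul Matrix.PosDef.one halp0
    haveI : Invertible (alp • (1 : Matrix (Fin p) (Fin p) ℝ)) :=
      Matrix.invertibleOfIsUnitDet _ (isUnit_iff_ne_zero.2 hmu1.det_pos.ne')
    have hbl : -(Matrix.fromBlocks
          ((A * (a • What) + B * (a • Yhat)) + (A * (a • What) + B * (a • Yhat))ᵀ -
            a • S + lamhat • (a • What)) Bw
          Bwᵀ (-(alp • (1 : Matrix (Fin p) (Fin p) ℝ)))) =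
        Matrix.fromBlocks
          (-((A * (a • What) + B * (a • Yhat)) + (A * (a • What) + B * (a • Yhat))ᵀ -
            a • S + lamhat • (a • What))) (-Bw)
          (-Bw)ᴴ (alp • (1 : Matrix (Fin p) (Fin p) ℝ)) := by
      rw [Matrix.fromBlocks_neg, neg_neg, ctR, Matrix.transpose_neg]
    rw [hbl, Matrix.PosDef.fromBlocks₂₂ _ _ hmu1]
    have hDinv : (alp • (1 : Matrix (Fin p) (Fin p) ℝ))⁻¹ = alp⁻¹ • 1 := by
      rw [smul_inv_eq halp0.ne' (by simp),
        show (1 : Matrix (Fin p) (Fin p) ℝ)⁻¹ = 1 from Matrix.inv_eq_right_inv (by simp)]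
    have key : -((A * (a • What) + B * (a • Yhat)) + (A * (a • What) + B * (a • Yhat))ᵀ -
            a • S + lamhat • (a • What)) -
          (-Bw) * (alp • (1 : Matrix (Fin p) (Fin p) ℝ))⁻¹ * (-Bw)ᴴ =
        a • (-(-S + ((A * What + B * Yhat) + (A * What + B * Yhat)ᵀ) +
            (2 * lamhat) • What)) +
          ((a * lamhat) • (What - β₁ • 1) + alp⁻¹ • (s ^ 2 • 1 - Bw * Bwᵀ)) := by
      rw [hDinv, ctR]
      simp only [Matrix.neg_mul, Matrix.mul_neg, neg_neg, Matrix.mul_smul, Matrix.smul_mul,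
        Matrix.mul_one, Matrix.transpose_add, Matrix.transpose_smul, Matrix.transpose_neg]
      match_scalars <;> first | ring1 | linear_combination h2 | linear_combination -h2
    rw [key]
    exact (psd_smul hccm ha0.le).add ((psd_smul hlow (by positivity)).add
      (psd_smul hBw (by positivity)))
  · -- condition (ii)
    have hApd : (lamhat • (a • What)).PosDef := pd_smul (pd_smul hWpd ha0) hlam
    haveI : Invertible (lamhat • (a • What)) :=
      Matrix.invertibleOfIsUnitDet _ (isUnit_iff_ne_zero.2 hApd.det_pos.ne')
    have hct : (Matrix.fromCols (0 : Matrix (Fin n) (Fin p) ℝ) (a • What))ᴴ =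
        Matrix.fromRows 0 (a • What) := by
      rw [Matrix.conjTranspose_fromCols_eq_fromRows_conjTranspose]
      simp [ctR, Matrix.transpose_smul, hWhat.eq]
    have hb3 : blk3 (lamhat • (a • What)) 0 (a • What)
            0 ((alp - alp) • (1 : Matrix (Fin p) (Fin p) ℝ)) 0
            (a • What) 0 (alp • (1 : Matrix (Fin n) (Fin n) ℝ)) =
        Matrix.fromBlocks (lamhat • (a • What))
          (Matrix.fromCols 0 (a • What))
          (Matrix.fromCols (0 : Matrix (Fin n) (Fin p) ℝ) (a • What))ᴴ
          (Matrix.fromBlocks ((alp - alp) • (1 : Matrix (Fin p) (Fin p) ℝ)) 0 0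
            (alp • (1 : Matrix (Fin n) (Fin n) ℝ))) := by
      rw [hct]
      unfold blk3
      ext i j
      rcases i with i | i | i <;> rcases j with j | j | j <;> rfl
    rw [hb3, Matrix.PosDef.fromBlocks₁₁ _ _ hApd]
    have hAinv : (lamhat • (a • What))⁻¹ = (lamhat * a)⁻¹ • What⁻¹ := by
      rw [smul_smul, smul_inv_eq (mul_ne_zero hlam.ne' ha0.ne') hWdet]
    have hCalc : (Matrix.fromCols (0 : Matrix (Fin n) (Fin p) ℝ) (a • What))ᴴ *
          (lamhat • (a • What))⁻¹ * Matrix.fromCols (0 : Matrix (Fin n) (Fin p) ℝ) (a • What) =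
        (Matrix.fromBlocks 0 0 0 ((a / lamhat) • What) :
          Matrix (Fin p ⊕ Fin n) (Fin p ⊕ Fin n) ℝ) := by
      rw [hct, hAinv, Matrix.fromRows_mul, Matrix.fromRows_mul_fromCols]
      simp only [Matrix.zero_mul, Matrix.mul_zero, smul_zero, Matrix.smul_mul,
        Matrix.mul_smul, smul_smul, Matrix.mul_assoc,
        Matrix.nonsing_inv_mul _ hWdet, Matrix.mul_one]
      rw [show (a * ((lamhat * a)⁻¹ * a) : ℝ) = a / lamhat by
        field_simp]
    rw [hCalc, fromBlocks_sub']
    have hq : alp • (1 : Matrix (Fin n) (Fin n) ℝ) - (a / lamhat) • What =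
        (a / lamhat) • (β₂ • (1 : Matrix (Fin n) (Fin n) ℝ) - What) := by
      match_scalars
      · rw [ha, halp, ← hsq1]; field_simp
      · ring
    rw [sub_zero, sub_zero, sub_zero, hq,
      show ((alp - alp) : ℝ) • (1 : Matrix (Fin p) (Fin p) ℝ) = 0 by simp]
    exact psd_blockDiag Matrix.PosSemidef.zero (psd_smul hupp (by positivity))
end
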